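/- Let p be a prime, e ≥ 1, and A, B ∈ R = ℤ/p^eℤ. Let e₁, e₂ ≥ 1 and let X₁, Z₁, X₂, Z₂ ∈ R satisfy p^(e₁) ∣ X₁, p^(e₂) ∣ X₂, p ∣ Z₁, p ∣ Z₂, and the curve equations Zᵢ = Xᵢ³ + A·Xᵢ·Zᵢ² + B·Zᵢ³ for i = 1, 2. Let T₁, T₂ be the Bosma–Lenstra addition-law polynomials evaluated at these data. Then T₂ is a unit of R, and T₁ · T₂⁻¹ ≡ X₁ + X₂ modulo p^(5·min(e₁,e₂)), i.e. (p : R)^(5·min(e₁,e₂)) divides Ring.inverse T₂ · T₁ − (X₁ + X₂). (Hence the sum of two points at infinity (X₁:1:Z₁) and (X₂:1:Z₂) has X-coordinate congruent to X₁ + X₂ modulo p^(5·min(e₁,e₂)).) -/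
import Mathlib


/-- First Bosma–Lenstra addition-law polynomial, specialized at `Y₁ = Y₂ = 1`. -/
def bosmaLenstraT1 {R : Type*} [CommRing R] (A B X₁ Z₁ X₂ Z₂ : R) : R :=
  (X₁ + X₂) - A * X₁ * X₂ * (Z₁ + Z₂) - A * (X₁ + X₂) * (X₁ * Z₂ + X₂ * Z₁)
    - 3 * B * (X₁ + X₂) * Z₁ * Z₂ - 3 * B * (X₁ * Z₂ + X₂ * Z₁) * (Z₁ + Z₂)
    + A ^ 2 * (Z₁ + Z₂) * Z₁ * Z₂

/-- Second Bosma–Lenstra addition-law polynomial, specialized at `Y₁ = Y₂ = 1`. -/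
def bosmaLenstraT2 {R : Type*} [CommRing R] (A B X₁ Z₁ X₂ Z₂ : R) : R :=
  1 + 3 * A * X₁ ^ 2 * X₂ ^ 2 + 9 * B * X₁ * X₂ * (X₁ * Z₂ + X₂ * Z₁)
    - A ^ 2 * X₁ * Z₂ * (X₁ * Z₂ + 2 * X₂ * Z₁)
    - A ^ 2 * X₂ * Z₁ * (2 * X₁ * Z₂ + X₂ * Z₁)
    - 3 * A * B * Z₁ * Z₂ * (X₁ * Z₂ + X₂ * Z₁)
    - (A ^ 3 + 9 * B ^ 2) * Z₁ ^ 2 * Z₂ ^ 2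

/-- The sum of two points at infinity `(X₁:1:Z₁)` and `(X₂:1:Z₂)` on the Weierstrass
curve over `ℤ/p^eℤ` has `X`-coordinate congruent to `X₁ + X₂` modulo `p^(5·min(e₁,e₂))`. -/
theorem infinity_sum_X_coordinate_congruent
    {p : ℕ} (hp : p.Prime) {e : ℕ} (he : 1 ≤ e)
    (A B : ZMod (p ^ e)) {e₁ e₂ : ℕ} (he₁ : 1 ≤ e₁) (he₂ : 1 ≤ e₂)
    (X₁ Z₁ X₂ Z₂ : ZMod (p ^ e))
    (hX₁ : (p : ZMod (p ^ e)) ^ e₁ ∣ X₁) (hX₂ : (p : ZMod (p ^ e)) ^ e₂ ∣ X₂)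
    (hZ₁ : (p : ZMod (p ^ e)) ∣ Z₁) (hZ₂ : (p : ZMod (p ^ e)) ∣ Z₂)
    (heq₁ : Z₁ = X₁ ^ 3 + A * X₁ * Z₁ ^ 2 + B * Z₁ ^ 3)
    (heq₂ : Z₂ = X₂ ^ 3 + A * X₂ * Z₂ ^ 2 + B * Z₂ ^ 3) :
    IsUnit (bosmaLenstraT2 A B X₁ Z₁ X₂ Z₂) ∧
      (p : ZMod (p ^ e)) ^ (5 * min e₁ e₂) ∣
        Ring.inverse (bosmaLenstraT2 A B X₁ Z₁ X₂ Z₂) *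
          bosmaLenstraT1 A B X₁ Z₁ X₂ Z₂ - (X₁ + X₂) := by
  have hpe : (p : ZMod (p ^ e)) ^ e = 0 := by
    rw [← Nat.cast_pow]; exact ZMod.natCast_self _
  have hnil : ∀ w : ZMod (p ^ e), IsNilpotent ((p : ZMod (p ^ e)) * w) := fun w =>
    ⟨e, by rw [mul_pow, hpe, zero_mul]⟩
  set q : ZMod (p ^ e) := (p : ZMod (p ^ e)) ^ min e₁ e₂ with hq
  obtain ⟨a₁, ha₁⟩ : q ∣ X₁ := dvd_trans (pow_dvd_pow _ (min_le_left e₁ e₂)) hX₁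
  obtain ⟨a₂, ha₂⟩ : q ∣ X₂ := dvd_trans (pow_dvd_pow _ (min_le_right e₁ e₂)) hX₂
  obtain ⟨w₁, hw₁⟩ := hZ₁
  obtain ⟨w₂, hw₂⟩ := hZ₂
  have hpq : (p : ZMod (p ^ e)) ∣ q :=
    dvd_pow_self _ (Nat.one_le_iff_ne_zero.mp (le_min he₁ he₂))
  obtain ⟨x₁, hx₁⟩ : (p : ZMod (p ^ e)) ∣ X₁ := hpq.trans ⟨a₁, ha₁⟩
  obtain ⟨x₂, hx₂⟩ : (p : ZMod (p ^ e)) ∣ X₂ := hpq.trans ⟨a₂, ha₂⟩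
  have hu₁ : IsUnit (1 - (A * X₁ * Z₁ + B * Z₁ ^ 2)) := by
    have h : A * X₁ * Z₁ + B * Z₁ ^ 2 = (p : ZMod (p ^ e)) * (A * X₁ * w₁ + B * w₁ * Z₁) := by
      rw [hw₁]; ring
    rw [h]; exact (hnil _).isUnit_one_sub
  have hu₂ : IsUnit (1 - (A * X₂ * Z₂ + B * Z₂ ^ 2)) := by
    have h : A * X₂ * Z₂ + B * Z₂ ^ 2 = (p : ZMod (p ^ e)) * (A * X₂ * w₂ + B * w₂ * Z₂) := by
      rw [hw₂]; ring
    rw [h]; exact (hnil _).isUnit_one_sub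
  obtain ⟨b₁, hb₁⟩ : q ^ 3 ∣ Z₁ := by
    have h : Z₁ * (1 - (A * X₁ * Z₁ + B * Z₁ ^ 2)) = X₁ ^ 3 := by
      linear_combination heq₁
    rw [← hu₁.dvd_mul_right, h, ha₁]
    exact ⟨a₁ ^ 3, by ring⟩
  obtain ⟨b₂, hb₂⟩ : q ^ 3 ∣ Z₂ := by
    have h : Z₂ * (1 - (A * X₂ * Z₂ + B * Z₂ ^ 2)) = X₂ ^ 3 := by
      linear_combination heq₂
    rw [← hu₂.dvd_mul_right, h, ha₂]
    exact ⟨a₂ ^ 3, by ring⟩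
  have hT2 : IsUnit (bosmaLenstraT2 A B X₁ Z₁ X₂ Z₂) := by
    have h1 : bosmaLenstraT2 A B X₁ Z₁ X₂ Z₂ = 1 + (p : ZMod (p ^ e)) *
        (3 * A * x₁ * X₁ * X₂ ^ 2 + 9 * B * x₁ * X₂ * (X₁ * Z₂ + X₂ * Z₁)
          - A ^ 2 * x₁ * Z₂ * (X₁ * Z₂ + 2 * X₂ * Z₁)
          - A ^ 2 * X₂ * w₁ * (2 * X₁ * Z₂ + X₂ * Z₁)
          - 3 * A * B * w₁ * Z₂ * (X₁ * Z₂ + X₂ * Z₁)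
          - (A ^ 3 + 9 * B ^ 2) * w₁ * Z₁ * Z₂ ^ 2) := by
      rw [bosmaLenstraT2]
      linear_combination (3 * A * X₁ * X₂ ^ 2 + 9 * B * X₂ * (X₁ * Z₂ + X₂ * Z₁)
        - A ^ 2 * Z₂ * (X₁ * Z₂ + 2 * X₂ * Z₁)) * hx₁
        + (- A ^ 2 * X₂ * (2 * X₁ * Z₂ + X₂ * Z₁)
          - 3 * A * B * Z₂ * (X₁ * Z₂ + X₂ * Z₁)
          - (A ^ 3 + 9 * B ^ 2) * Z₁ * Z₂ ^ 2) * hw₁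
    rw [h1]
    exact (hnil _).isUnit_one_add
  refine ⟨hT2, ?_⟩
  have key : q ^ 5 ∣ bosmaLenstraT1 A B X₁ Z₁ X₂ Z₂
      - (X₁ + X₂) * bosmaLenstraT2 A B X₁ Z₁ X₂ Z₂ := by
    refine ⟨(-6) * B * a₂ * b₁ * b₂ * q ^ 2 + (-3) * B * a₂ * b₁ ^ 2 * q ^ 2 + (-3) * B * a₁ * b₂ ^ 2 * q ^ 2 + (-6) * B * a₁ * b₁ * b₂ * q ^ 2 + (-9) * B * a₁ * a₂ ^ 3 * b₁ * q ^ 2 + (-9) * B * a₁ ^ 2 * a₂ ^ 2 * b₂ * q ^ 2 + (-9) * B * a₁ ^ 2 * a₂ ^ 2 * b₁ * q ^ 2 + (-9) * B * a₁ ^ 3 * a₂ * b₂ * q ^ 2 + 9 * B ^ 2 * a₂ * b₁ ^ 2 * b₂ ^ 2 * q ^ 8 + 9 * B ^ 2 * a₁ * b₁ ^ 2 * b₂ ^ 2 * q ^ 8 + (-1) * A * a₂ ^ 2 * b₁ + (-2) * A * a₁ * a₂ * b₂ + (-2) * A * a₁ * a₂ * b₁ + (-1) * A * a₁ ^ 2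 * b₂ + (-3) * A * a₁ ^ 2 * a₂ ^ 3 + (-3) * A * a₁ ^ 3 * a₂ ^ 2 + 3 * A * B * a₂ ^ 2 * b₁ ^ 2 * b₂ * q ^ 6 + 3 * A * B * a₁ * a₂ * b₁ * b₂ ^ 2 * q ^ 6 + 3 * A * B * a₁ * a₂ * b₁ ^ 2 * b₂ * q ^ 6 + 3 * A * B * a₁ ^ 2 * b₁ * b₂ ^ 2 * q ^ 6 + A ^ 2 * b₁ * b₂ ^ 2 * q ^ 4 + A ^ 2 * b₁ ^ 2 * b₂ * q ^ 4 + A ^ 2 * a₂ ^ 3 * b₁ ^ 2 * q ^ 4 + 4 * A ^ 2 * a₁ * a₂ ^ 2 * b₁ * b₂ * q ^ 4 + A ^ 2 * a₁ * a₂ ^ 2 * b₁ ^ 2 * q ^ 4 + A ^ 2 * a₁ ^ 2 * a₂ * b₂ ^ 2 * q ^ 4 + 4 * A ^ 2 * a₁ ^ 2 * a₂ * b₁ * b₂ * q ^ 4 + A ^ 2 * a₁ ^ 3 * b₂ ^ 2 * q ^ 4 + A ^ 3 * a₂ * b₁ ^ 2 * b₂ ^ 2 * q ^ 8 + A ^ 3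 * a₁ * b₁ ^ 2 * b₂ ^ 2 * q ^ 8, ?_⟩
    rw [bosmaLenstraT1, bosmaLenstraT2, ha₁, ha₂, hb₁, hb₂]
    ring
  have hrw : Ring.inverse (bosmaLenstraT2 A B X₁ Z₁ X₂ Z₂) *
      bosmaLenstraT1 A B X₁ Z₁ X₂ Z₂ - (X₁ + X₂) =
      Ring.inverse (bosmaLenstraT2 A B X₁ Z₁ X₂ Z₂) *
        (bosmaLenstraT1 A B X₁ Z₁ X₂ Z₂ - (X₁ + X₂) * bosmaLenstraT2 A B X₁ Z₁ X₂ Z₂) := by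
    rw [mul_sub]
    congr 1
    rw [mul_comm (X₁ + X₂), ← mul_assoc, Ring.inverse_mul_cancel _ hT2, one_mul]
  rw [hrw]
  have hq5 : (p : ZMod (p ^ e)) ^ (5 * min e₁ e₂) = q ^ 5 := by
    rw [hq, ← pow_mul, Nat.mul_comm]
  rw [hq5]
  exact key.mul_left _
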